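/- arXiv:1306.1860 — 12 statements merged into one kernel-verified Lean document; each statement's English description precedes it below -/
import Mathlib

section
/- Let n ≥ 1, let A be an n×n real matrix, α ∈ ℝ^n, and let Y : ℕ → ℝ^n satisfy Y_x = A·Y_{x-1} + α for all x ≥ 1. Write (λ − 1)·(characteristic polynomial of A) = λ^{n+1} + c*_1·λ^n + c*_2·λ^{n-1} + ... + c*_{n+1}, i.e. c*_j is the coefficient of λ^{n+1-j} in the polynomial (λ − 1)·det(λI − A). Then for every x ≥ n+1, Y_x = −(c*_1·Y_{x-1} + c*_2·Y_{x-2} + ... + c*_{n+1}·Y_{x-n-1}). In particular each coordinate sequence satisfies a homogeneous linear recurrence of order n+1 with constant coefficients in which the absolute term α no longer appears. -/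
/-! Let `S` be the shift `(S Y)_b = Y_{b+1}` on sequences, so that `(q(S) Y)_b = ∑ₖ qₖ Y_{b+k}`.
The polynomial `X - 1` acts by taking differences, and the differences `D_b = Y_{b+1} - Y_b`
of a solution of `Y_{b+1} = A Y_b + α` solve the homogeneous recurrence `D_{b+1} = A D_b`, so
`p(S) D_b = p(A) D_b` for every polynomial `p`. With `p = charpoly A`, Cayley–Hamilton gives
`((X - 1) · charpoly A)(S) Y = 0`; since `(X - 1) · charpoly A` is monic of degree `n + 1`, this
is the claimed recurrence read backwards from `x = b + n + 1`. -/

open Polynomial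

section SequenceShift

variable (R M : Type*) [CommRing R] [AddCommGroup M] [Module R M]

def sequenceShift : Module.End R (ℕ → M) :=
  LinearMap.funLeft R M (· + 1)

variable {R M}

@[simp]
theorem sequenceShift_apply (Y : ℕ → M) (b : ℕ) : sequenceShift R M Y b = Y (b + 1) := rfl

theorem sequenceShift_pow_apply (k : ℕ) (Y : ℕ → M) (b : ℕ) :
    (sequenceShift R M ^ k) Y b = Y (b + k) := by
  induction k generalizing b with
  | zero => rfl
  | succ k ih =>
    rw [pow_succ', Module.End.mul_apply, sequenceShift_apply, ih, add_right_comm, add_assoc]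

theorem aeval_sequenceShift_apply (q : R[X]) (Y : ℕ → M) (b : ℕ) :
    aeval (sequenceShift R M) q Y b = q.sum fun k c => c • Y (b + k) := by
  simp only [aeval_endomorphism, Polynomial.sum, Finset.sum_apply, Pi.smul_apply,
    sequenceShift_pow_apply]

theorem aeval_sequenceShift_apply_of_forall_succ (f : Module.End R M) {Z : ℕ → M}
    (hZ : ∀ b, Z (b + 1) = f (Z b)) (q : R[X]) (b : ℕ) :
    aeval (sequenceShift R M) q Z b = aeval f q (Z b) := by
  have hpow : ∀ k, Z (b + k) = (f ^ k) (Z b) := by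
    intro k
    induction k with
    | zero => rfl
    | succ k ih => rw [← add_assoc, hZ, ih, pow_succ', Module.End.mul_apply]
  simp only [aeval_sequenceShift_apply, aeval_endomorphism, hpow]

theorem aeval_sequenceShift_X_sub_one_mul_eq_zero (f : Module.End R M) {p : R[X]}
    (hp : aeval f p = 0) (α : M) {Y : ℕ → M} (hY : ∀ b, Y (b + 1) = f (Y b) + α) :
    aeval (sequenceShift R M) ((X - 1) * p) Y = 0 := by
  have hD : ∀ b, aeval (sequenceShift R M) (X - 1 : R[X]) Y (b + 1) =
      f (aeval (sequenceShift R M) (X - 1 : R[X]) Y b) := by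
    intro b
    simp only [map_sub, aeval_X, map_one, LinearMap.sub_apply, Module.End.one_apply,
      Pi.sub_apply, sequenceShift_apply, hY]
    abel
  ext b
  rw [mul_comm, map_mul, Module.End.mul_apply, aeval_sequenceShift_apply_of_forall_succ f hD,
    hp, LinearMap.zero_apply, Pi.zero_apply]

end SequenceShift

theorem Polynomial.Monic.sum_smul_eq_add_sum_Icc {R M : Type*} [Semiring R] [AddCommMonoid M]
    [Module R M] {q : R[X]} (hq : q.Monic) (Y : ℕ → M) {x : ℕ} (hx : q.natDegree ≤ x) :
    (q.sum fun k c => c • Y (x - q.natDegree + k)) =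
      Y x + ∑ j ∈ Finset.Icc 1 q.natDegree, q.coeff (q.natDegree - j) • Y (x - j) := by
  set d := q.natDegree
  rw [sum_over_range' q (f := fun k c => c • Y (x - d + k)) (fun _ => zero_smul R _) (d + 1)
    d.lt_succ_self, ← Finset.sum_range_reflect, Finset.sum_range_succ', add_comm]
  simp only [Nat.add_sub_cancel, Nat.sub_zero]
  congr 1
  · rw [Nat.sub_add_cancel hx, hq.coeff_natDegree, one_smul]
  · rw [Finset.range_eq_Ico, Finset.sum_Ico_add' (fun j => q.coeff (d - j) • Y (x - d + (d - j))),
      zero_add, Finset.Ico_add_one_right_eq_Icc]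
    refine Finset.sum_congr rfl fun j hj => ?_
    rw [Finset.mem_Icc] at hj
    rw [show x - d + (d - j) = x - j by omega]

theorem Matrix.aeval_toLin'_charpoly {R n : Type*} [CommRing R] [Fintype n] [DecidableEq n]
    (A : Matrix n n R) : aeval (Matrix.toLin' A) A.charpoly = 0 := by
  rw [← Matrix.charpoly_toLin']
  exact LinearMap.aeval_self_charpoly _

theorem affine_matrix_recurrence_to_regular_general (n : ℕ)
    (A : Matrix (Fin n) (Fin n) ℝ) (α : Fin n → ℝ) (Y : ℕ → Fin n → ℝ)
    (hY : ∀ x, 1 ≤ x → Y x = A.mulVec (Y (x - 1)) + α) :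
    ∀ x, n + 1 ≤ x →
      Y x = -(∑ j ∈ Finset.Icc 1 (n + 1),
        (((Polynomial.X - 1) * A.charpoly).coeff (n + 1 - j)) • Y (x - j)) := by
  intro x hx
  have hX : (X - 1 : ℝ[X]).Monic := by simpa using monic_X_sub_C (1 : ℝ)
  set q := (X - 1 : ℝ[X]) * A.charpoly
  have hq : q.Monic := hX.mul A.charpoly_monic
  have hdeg : q.natDegree = n + 1 := by
    rw [hX.natDegree_mul A.charpoly_monic, A.charpoly_natDegree_eq_dim, Fintype.card_fin,
      ← C_1, natDegree_X_sub_C, add_comm]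
  have hrec : ∀ b, Y (b + 1) = Matrix.toLin' A (Y b) + α := fun b => hY (b + 1) b.succ_pos
  have hsum := congrFun (aeval_sequenceShift_X_sub_one_mul_eq_zero _
    (Matrix.aeval_toLin'_charpoly A) α hrec) (x - (n + 1))
  rw [← hdeg] at hsum hx ⊢
  rw [aeval_sequenceShift_apply, hq.sum_smul_eq_add_sum_Icc Y hx] at hsum
  exact eq_neg_of_add_eq_zero_left hsum

/-- If `Y x = A ⬝ Y (x-1) + α` for all `x ≥ 1`, and
`(λ - 1) · det(λ I - A) = λ^{n+1} + c*₁ λ^n + ⋯ + c*_{n+1}`, i.e. `c*ⱼ` is the coefficient of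
`λ^{n+1-j}` in `(λ - 1) · charpoly A`, then for every `x ≥ n+1`,
`Y x = -(c*₁ • Y (x-1) + c*₂ • Y (x-2) + ⋯ + c*_{n+1} • Y (x-n-1))`. -/
theorem affine_matrix_recurrence_to_regular (n : ℕ) (hn : 1 ≤ n)
    (A : Matrix (Fin n) (Fin n) ℝ) (α : Fin n → ℝ) (Y : ℕ → Fin n → ℝ)
    (hY : ∀ x, 1 ≤ x → Y x = A.mulVec (Y (x - 1)) + α) :
    ∀ x, n + 1 ≤ x →
      Y x = -(∑ j ∈ Finset.Icc 1 (n + 1),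
        (((Polynomial.X - 1) * A.charpoly).coeff (n + 1 - j)) • Y (x - j)) :=
  affine_matrix_recurrence_to_regular_general n A α Y hY
end

section
/- Let α₁₁, α₁₂, α₂₁, α₂₂, α₁, α₂ be real numbers and let a, b : ℕ → ℝ satisfy a_x = α₁₁·a_{x-1} + α₁₂·b_{x-1} + α₁ and b_x = α₂₁·a_{x-1} + α₂₂·b_{x-1} + α₂ for all x ≥ 1, and suppose α₁₁ + α₁₂ = α₂₁ + α₂₂. Write S = α₁₁ + α₁₂ and D = α₁₁ − α₂₁. If α₁₂ ≠ −α₂₁, S ≠ 1 and D ≠ 1, then for all x: a_x = S^x·a₀ + α₁₂·(b₀ − a₀)·(S^x − D^x)/(α₁₂ + α₂₁) + α₁·(S^x − 1)/(S − 1) + (α₁₂·(α₂ − α₁)/(α₁₂ + α₂₁))·((S^x − S)/(S − 1) − (D^x − D)/(D − 1)), and b_x = S^x·b₀ + α₂₁·(a₀ − b₀)·(S^x − D^x)/(α₁₂ + α₂₁) + α₂·(S^x − 1)/(S − 1) + (α₂₁·(α₁ − α₂)/(α₁₂ + α₂₁))·((S^x − S)/(S − 1) − (D^x − D)/(D − 1)).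 -/
/-- Case 1 of the explicit solution of two simultaneous affine recurrences with equal
row sums of coefficients: `α₁₂ ≠ -α₂₁`, `α₁₁ + α₁₂ ≠ 1`, `α₁₁ - α₂₁ ≠ 1`. -/
theorem two_affine_recurrences_case1 (α11 α12 α21 α22 α1 α2 : ℝ) (a b : ℕ → ℝ)
    (ha : ∀ x, 1 ≤ x → a x = α11 * a (x - 1) + α12 * b (x - 1) + α1)
    (hb : ∀ x, 1 ≤ x → b x = α21 * a (x - 1) + α22 * b (x - 1) + α2)
    (hrow : α11 + α12 = α21 + α22)
    (S D : ℝ) (hS : S = α11 + α12) (hD : D = α11 - α21)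
    (h1 : α12 ≠ -α21) (h2 : S ≠ 1) (h3 : D ≠ 1) :
    ∀ x : ℕ,
      a x = S ^ x * a 0 + α12 * (b 0 - a 0) * ((S ^ x - D ^ x) / (α12 + α21))
          + α1 * ((S ^ x - 1) / (S - 1))
          + (α12 * (α2 - α1) / (α12 + α21))
            * ((S ^ x - S) / (S - 1) - (D ^ x - D) / (D - 1)) ∧
      b x = S ^ x * b 0 + α21 * (a 0 - b 0) * ((S ^ x - D ^ x) / (α12 + α21))
          + α2 * ((S ^ x - 1) / (S - 1))
          + (α21 * (α1 - α2) / (α12 + α21))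
            * ((S ^ x - S) / (S - 1) - (D ^ x - D) / (D - 1)) := by
  have hsum : α12 + α21 ≠ 0 := fun h => h1 (by linarith)
  have hS1 : S - 1 ≠ 0 := sub_ne_zero.mpr h2
  have hD1 : D - 1 ≠ 0 := sub_ne_zero.mpr h3
  have h22 : α22 = α11 + α12 - α21 := by linarith
  subst hS hD h22
  intro x
  induction x with
  | zero =>
    constructor <;>
    · simp only [pow_zero, one_mul, sub_self, zero_div, mul_zero, add_zero]
      field_simp
      ring
  | succ n ih =>
    obtain ⟨iha, ihb⟩ := ih
    have hA := ha (n + 1) (by omega)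
    have hB := hb (n + 1) (by omega)
    simp only [Nat.add_sub_cancel] at hA hB
    rw [iha, ihb] at hA hB
    refine ⟨?_, ?_⟩ <;> [rw [hA]; rw [hB]] <;>
    · field_simp
      ring
end

section
/- Let α₁₁, α₁₂, α₂₁, α₂₂, α₁, α₂ be real numbers and let a, b : ℕ → ℝ satisfy a_x = α₁₁·a_{x-1} + α₁₂·b_{x-1} + α₁ and b_x = α₂₁·a_{x-1} + α₂₂·b_{x-1} + α₂ for all x ≥ 1, and suppose α₁₁ + α₁₂ = α₂₁ + α₂₂. Write S = α₁₁ + α₁₂ and D = α₁₁ − α₂₁. If α₁₂ ≠ −α₂₁ and S = 1 (so D ≠ 1), then for all x: a_x = S^x·a₀ + α₁₂·(b₀ − a₀)·(S^x − D^x)/(α₁₂ + α₂₁) + α₁·x + (α₁₂·(α₂ − α₁)/(D − 1))·((D^x − D)/(D − 1) − x + 1), and b_x = S^x·b₀ + α₂₁·(a₀ − b₀)·(S^x − D^x)/(α₁₂ + α₂₁) + α₂·x + (α₂₁·(α₁ − α₂)/(D − 1))·((D^x − D)/(D − 1) − x + 1). -/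
/-- Case 2 of the explicit solution of two simultaneous affine recurrences with equal
row sums of coefficients: `α₁₂ ≠ -α₂₁`, `α₁₁ + α₁₂ = 1` (whence `α₁₁ - α₂₁ ≠ 1`). -/
theorem two_affine_recurrences_case2 (α11 α12 α21 α22 α1 α2 : ℝ) (a b : ℕ → ℝ)
    (ha : ∀ x, 1 ≤ x → a x = α11 * a (x - 1) + α12 * b (x - 1) + α1)
    (hb : ∀ x, 1 ≤ x → b x = α21 * a (x - 1) + α22 * b (x - 1) + α2)
    (hrow : α11 + α12 = α21 + α22)
    (S D : ℝ) (hS : S = α11 + α12) (hD : D = α11 - α21)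
    (h1 : α12 ≠ -α21) (h2 : S = 1) :
    ∀ x : ℕ,
      a x = S ^ x * a 0 + α12 * (b 0 - a 0) * ((S ^ x - D ^ x) / (α12 + α21))
          + α1 * x
          + (α12 * (α2 - α1) / (D - 1)) * ((D ^ x - D) / (D - 1) - x + 1) ∧
      b x = S ^ x * b 0 + α21 * (a 0 - b 0) * ((S ^ x - D ^ x) / (α12 + α21))
          + α2 * x
          + (α21 * (α1 - α2) / (D - 1)) * ((D ^ x - D) / (D - 1) - x + 1) := by
  have hs : α12 + α21 ≠ 0 := fun h => h1 (by linarith)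
  subst hS hD
  have h11 : α11 = 1 - α12 := by linarith
  have h22 : α22 = α11 + α12 - α21 := by linarith
  subst h11 h22
  have hd1 : (1 - α12 - α21) - 1 ≠ 0 := by intro h; exact hs (by linarith)
  intro x
  induction x with
  | zero =>
    constructor <;> (simp only [pow_zero, Nat.cast_zero]; field_simp; try ring)
  | succ n ih =>
    obtain ⟨iha, ihb⟩ := ih
    have hga := ha (n + 1) (by omega)
    have hgb := hb (n + 1) (by omega)
    simp only [Nat.add_sub_cancel] at hga hgb
    rw [hga, hgb, iha, ihb]
    constructor <;> (simp only [pow_succ, Nat.cast_succ]; field_simp; try ring)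
end

section
/- Let α₁₁, α₁₂, α₂₁, α₂₂, α₁, α₂ be real numbers and let a, b : ℕ → ℝ satisfy a_x = α₁₁·a_{x-1} + α₁₂·b_{x-1} + α₁ and b_x = α₂₁·a_{x-1} + α₂₂·b_{x-1} + α₂ for all x ≥ 1, and suppose α₁₁ + α₁₂ = α₂₁ + α₂₂. Write S = α₁₁ + α₁₂ and D = α₁₁ − α₂₁. If α₁₂ ≠ −α₂₁ and D = 1 (so S ≠ 1), then for all x: a_x = S^x·a₀ + α₁₂·(b₀ − a₀)·(S^x − D^x)/(α₁₂ + α₂₁) + α₁·(S^x − 1)/(S − 1) + (α₁₂·(α₂ − α₁)/(S − 1))·((S^x − S)/(S − 1) − x + 1), and b_x = S^x·b₀ + α₂₁·(a₀ − b₀)·(S^x − D^x)/(α₁₂ + α₂₁) + α₂·(S^x − 1)/(S − 1) + (α₂₁·(α₁ − α₂)/(S − 1))·((S^x − S)/(S − 1) − x + 1). -/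
/-- Case 3 of the explicit solution of two simultaneous affine recurrences with equal
row sums of coefficients: `α₁₂ ≠ -α₂₁`, `α₁₁ - α₂₁ = 1` (whence `α₁₁ + α₁₂ ≠ 1`). -/
theorem two_affine_recurrences_case3 (α11 α12 α21 α22 α1 α2 : ℝ) (a b : ℕ → ℝ)
    (ha : ∀ x, 1 ≤ x → a x = α11 * a (x - 1) + α12 * b (x - 1) + α1)
    (hb : ∀ x, 1 ≤ x → b x = α21 * a (x - 1) + α22 * b (x - 1) + α2)
    (hrow : α11 + α12 = α21 + α22)
    (S D : ℝ) (hS : S = α11 + α12) (hD : D = α11 - α21)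
    (h1 : α12 ≠ -α21) (h2 : D = 1) :
    ∀ x : ℕ,
      a x = S ^ x * a 0 + α12 * (b 0 - a 0) * ((S ^ x - D ^ x) / (α12 + α21))
          + α1 * ((S ^ x - 1) / (S - 1))
          + (α12 * (α2 - α1) / (S - 1)) * ((S ^ x - S) / (S - 1) - x + 1) ∧
      b x = S ^ x * b 0 + α21 * (a 0 - b 0) * ((S ^ x - D ^ x) / (α12 + α21))
          + α2 * ((S ^ x - 1) / (S - 1))
          + (α21 * (α1 - α2) / (S - 1)) * ((S ^ x - S) / (S - 1) - x + 1) := by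
  have hsum : α12 + α21 ≠ 0 := fun h => h1 (by linarith)
  have ha11 : α11 = α21 + 1 := by rw [hD] at h2; linarith
  have ha22 : α22 = α12 + 1 := by linarith
  subst ha11 ha22 hS h2
  have hS1 : α21 + 1 + α12 - 1 ≠ 0 := by intro h; apply hsum; linarith
  intro x
  induction x with
  | zero =>
    constructor <;> (field_simp; try ring)
  | succ n ih =>
    obtain ⟨iha, ihb⟩ := ih
    have hA := ha (n+1) (by omega)
    have hB := hb (n+1) (by omega)
    simp only [Nat.add_sub_cancel] at hA hB
    rw [hA, hB, iha, ihb]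
    constructor <;> (push_cast; field_simp; ring)
end

section
/- Let α₁₁, α₁₂, α₂₁, α₂₂, α₁, α₂ be real numbers and let a, b : ℕ → ℝ satisfy a_x = α₁₁·a_{x-1} + α₁₂·b_{x-1} + α₁ and b_x = α₂₁·a_{x-1} + α₂₂·b_{x-1} + α₂ for all x ≥ 1, and suppose α₁₁ + α₁₂ = α₂₁ + α₂₂. Write S = α₁₁ + α₁₂. If α₁₂ = −α₂₁ and S ≠ 1, then for all x ≥ 1: a_x = S^{x-1}·(S·a₀ + α₁₂·(b₀ − a₀)·x) + α₁·(S^x − 1)/(S − 1) + (α₁₂·(α₂ − α₁)/(S − 1)²)·((x − 1)·S^x − x·S^{x-1} + 1), and b_x = S^{x-1}·(S·b₀ + α₂₁·(a₀ − b₀)·x) + α₂·(S^x − 1)/(S − 1) + (α₂₁·(α₁ − α₂)/(S − 1)²)·((x − 1)·S^x − x·S^{x-1} + 1). -/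
/-- Case 4 of the explicit solution of two simultaneous affine recurrences with equal
row sums of coefficients: `α₁₂ = -α₂₁`, `α₁₁ + α₁₂ ≠ 1`. -/
theorem two_affine_recurrences_case4 (α11 α12 α21 α22 α1 α2 : ℝ) (a b : ℕ → ℝ)
    (ha : ∀ x, 1 ≤ x → a x = α11 * a (x - 1) + α12 * b (x - 1) + α1)
    (hb : ∀ x, 1 ≤ x → b x = α21 * a (x - 1) + α22 * b (x - 1) + α2)
    (hrow : α11 + α12 = α21 + α22)
    (S : ℝ) (hS : S = α11 + α12)
    (h1 : α12 = -α21) (h2 : S ≠ 1) :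
    ∀ x : ℕ, 1 ≤ x →
      a x = S ^ (x - 1) * (S * a 0 + α12 * (b 0 - a 0) * x)
          + α1 * ((S ^ x - 1) / (S - 1))
          + (α12 * (α2 - α1) / (S - 1) ^ 2)
            * (((x : ℝ) - 1) * S ^ x - (x : ℝ) * S ^ (x - 1) + 1) ∧
      b x = S ^ (x - 1) * (S * b 0 + α21 * (a 0 - b 0) * x)
          + α2 * ((S ^ x - 1) / (S - 1))
          + (α21 * (α1 - α2) / (S - 1) ^ 2)
            * (((x : ℝ) - 1) * S ^ x - (x : ℝ) * S ^ (x - 1) + 1) := by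
  have hS1 : S - 1 ≠ 0 := sub_ne_zero.mpr h2
  have hA11 : α11 = S + α21 := by rw [hS, h1]; ring
  have hA22 : α22 = S - α21 := by rw [hS]; linarith
  subst h1 hA11 hA22
  intro x hx
  induction x, hx using Nat.le_induction with
  | base =>
    constructor
    · rw [ha 1 le_rfl]
      simp only [Nat.sub_self, pow_zero, pow_one, Nat.cast_one]
      field_simp
      ring
    · rw [hb 1 le_rfl]
      simp only [Nat.sub_self, pow_zero, pow_one, Nat.cast_one]
      field_simp
      ring
  | succ n hn ih =>
    obtain ⟨m, rfl⟩ : ∃ m, n = m + 1 := ⟨n - 1, by omega⟩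
    obtain ⟨iha, ihb⟩ := ih
    have e1 : m + 1 + 1 - 1 = m + 1 := rfl
    have e2 : m + 1 - 1 = m := rfl
    rw [e2] at iha ihb
    constructor
    · rw [ha (m + 1 + 1) (by omega), e1, iha, ihb]
      simp only [pow_succ]
      push_cast
      field_simp
      ring
    · rw [hb (m + 1 + 1) (by omega), e1, iha, ihb]
      simp only [pow_succ]
      push_cast
      field_simp
      ring
end

section
/- Let α₁₁, α₁₂, α₂₁, α₂₂, α₁, α₂ be real numbers and let a, b : ℕ → ℝ satisfy a_x = α₁₁·a_{x-1} + α₁₂·b_{x-1} + α₁ and b_x = α₂₁·a_{x-1} + α₂₂·b_{x-1} + α₂ for all x ≥ 1, and suppose α₁₁ + α₁₂ = α₂₁ + α₂₂. Write S = α₁₁ + α₁₂. If α₁₂ = −α₂₁ and S = 1, then for all x ≥ 1: a_x = S^{x-1}·(S·a₀ + α₁₂·(b₀ − a₀)·x) + α₁·x + α₁₂·(α₂ − α₁)·x·(x − 1)/2, and b_x = S^{x-1}·(S·b₀ + α₂₁·(a₀ − b₀)·x) + α₂·x + α₂₁·(α₁ − α₂)·x·(x − 1)/2. -/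
/-- Case 5 of the explicit solution of two simultaneous affine recurrences with equal
row sums of coefficients: `α₁₂ = -α₂₁`, `α₁₁ + α₁₂ = 1`. -/
theorem two_affine_recurrences_case5 (α11 α12 α21 α22 α1 α2 : ℝ) (a b : ℕ → ℝ)
    (ha : ∀ x, 1 ≤ x → a x = α11 * a (x - 1) + α12 * b (x - 1) + α1)
    (hb : ∀ x, 1 ≤ x → b x = α21 * a (x - 1) + α22 * b (x - 1) + α2)
    (hrow : α11 + α12 = α21 + α22)
    (S : ℝ) (hS : S = α11 + α12)
    (h1 : α12 = -α21) (h2 : S = 1) :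
    ∀ x : ℕ, 1 ≤ x →
      a x = S ^ (x - 1) * (S * a 0 + α12 * (b 0 - a 0) * x)
          + α1 * x + α12 * (α2 - α1) * ((x : ℝ) * ((x : ℝ) - 1) / 2) ∧
      b x = S ^ (x - 1) * (S * b 0 + α21 * (a 0 - b 0) * x)
          + α2 * x + α21 * (α1 - α2) * ((x : ℝ) * ((x : ℝ) - 1) / 2) := by
  subst hS h1
  have h11 : α11 = 1 + α21 := by linarith
  have h22 : α22 = 1 - α21 := by linarith
  intro x hx
  induction x, hx using Nat.le_induction with
  | base =>
    rw [h2]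
    constructor
    · rw [ha 1 le_rfl]
      norm_num
      linear_combination a 0 * h2
    · rw [hb 1 le_rfl]
      norm_num
      linear_combination b 0 * h22
  | succ n hn ih =>
    obtain ⟨iha, ihb⟩ := ih
    rw [h2, one_pow] at iha ihb ⊢
    constructor
    · rw [ha (n + 1) (by omega), Nat.add_sub_cancel, iha, ihb, h11]
      push_cast
      ring
    · rw [hb (n + 1) (by omega), Nat.add_sub_cancel, iha, ihb, h22]
      push_cast
      ring
end

section
/- Let α_{ij} (1 ≤ i,j ≤ 3) and α₁, α₂, α₃, w₁, w₂ be real numbers with w₁ + w₂ = 1 and w₂ ≠ 0, and let a, b, c : ℕ → ℝ satisfy a_x = α₁₁·a_{x-1} + α₁₂·b_{x-1} + α₁₃·c_{x-1} + α₁, b_x = α₂₁·a_{x-1} + α₂₂·b_{x-1} + α₂₃·c_{x-1} + α₂, c_x = α₃₁·a_{x-1} + α₃₂·b_{x-1} + α₃₃·c_{x-1} + α₃ for all x ≥ 1. Assume α₁₁ + α₁₂ + α₁₃ = α₂₁ + α₂₂ + α₂₃ = α₃₁ + α₃₂ + α₃₃ and b_x = w₁·a_x + w₂·c_x for all x. Then,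 with α'₁₁ = α₁₁ − (w₁/w₂)·α₁₃, α'₁₂ = α₁₂ + (1/w₂)·α₁₃, α'₂₁ = α₂₁ − (w₁/w₂)·α₂₃, α'₂₂ = α₂₂ + (1/w₂)·α₂₃, one has for all x ≥ 1: a_x = α'₁₁·a_{x-1} + α'₁₂·b_{x-1} + α₁ and b_x = α'₂₁·a_{x-1} + α'₂₂·b_{x-1} + α₂, and moreover α'₁₁ + α'₁₂ = α'₂₁ + α'₂₂. -/
/-!
On the line `b = w₁ a + w₂ c` with `w₂ ≠ 0` one can solve `c = (b - w₁ a) / w₂`, so each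
linear form `α a + β b + γ c` becomes a form in `a` and `b` alone. Because `w₁ + w₂ = 1`, the
new coefficients `α - (w₁ / w₂) γ` and `β + γ / w₂` have the same sum `α + β + γ` as the old
ones, so equal row sums stay equal.
-/

section Elimination

variable {K : Type*} [Field K] {w₁ w₂ : K}

theorem linear_form_eq_of_eq_affine_comb (hw₂ : w₂ ≠ 0) {p q r : K} (h : q = w₁ * p + w₂ * r)
    (α β γ : K) :
    α * p + β * q + γ * r = (α - w₁ / w₂ * γ) * p + (β + 1 / w₂ * γ) * q := by
  rw [h]
  field_simp
  ring

theorem eliminated_coeff_sum (hw : w₁ + w₂ = 1) (hw₂ : w₂ ≠ 0) (α β γ : K) :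
    (α - w₁ / w₂ * γ) + (β + 1 / w₂ * γ) = α + β + γ := by
  calc (α - w₁ / w₂ * γ) + (β + 1 / w₂ * γ) = α + β + (1 - w₁) / w₂ * γ := by ring
    _ = α + β + γ := by rw [show 1 - w₁ = w₂ by rw [← hw]; ring, div_self hw₂, one_mul]

end Elimination

theorem decompose_to_ab_general (α11 α12 α13 α21 α22 α23 α1 α2 w1 w2 : ℝ)
    (hw : w1 + w2 = 1) (hw2 : w2 ≠ 0) (a b c : ℕ → ℝ)
    (ha : ∀ x, 1 ≤ x → a x = α11 * a (x - 1) + α12 * b (x - 1) + α13 * c (x - 1) + α1)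
    (hb : ∀ x, 1 ≤ x → b x = α21 * a (x - 1) + α22 * b (x - 1) + α23 * c (x - 1) + α2)
    (hrow1 : α11 + α12 + α13 = α21 + α22 + α23)
    (hcomb : ∀ x, b x = w1 * a x + w2 * c x)
    (α11' α12' α21' α22' : ℝ)
    (h11' : α11' = α11 - (w1 / w2) * α13) (h12' : α12' = α12 + (1 / w2) * α13)
    (h21' : α21' = α21 - (w1 / w2) * α23) (h22' : α22' = α22 + (1 / w2) * α23) :
    (∀ x, 1 ≤ x →
      a x = α11' * a (x - 1) + α12' * b (x - 1) + α1 ∧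
      b x = α21' * a (x - 1) + α22' * b (x - 1) + α2) ∧
    α11' + α12' = α21' + α22' := by
  subst h11' h12' h21' h22'
  refine ⟨fun x hx => ⟨?_, ?_⟩, ?_⟩
  · rw [ha x hx, linear_form_eq_of_eq_affine_comb hw2 (hcomb (x - 1))]
  · rw [hb x hx, linear_form_eq_of_eq_affine_comb hw2 (hcomb (x - 1))]
  · rw [eliminated_coeff_sum hw hw2, eliminated_coeff_sum hw hw2, hrow1]

/-- Decomposition of the order-three matrix recurrence (with equal row sums and
`b = w₁·a + w₂·c`) into a pair of simultaneous recurrences in `a` and `b`;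
the new row sums of coefficients are again equal. -/
theorem decompose_to_ab (α11 α12 α13 α21 α22 α23 α31 α32 α33 α1 α2 α3 w1 w2 : ℝ)
    (hw : w1 + w2 = 1) (hw2 : w2 ≠ 0) (a b c : ℕ → ℝ)
    (ha : ∀ x, 1 ≤ x → a x = α11 * a (x - 1) + α12 * b (x - 1) + α13 * c (x - 1) + α1)
    (hb : ∀ x, 1 ≤ x → b x = α21 * a (x - 1) + α22 * b (x - 1) + α23 * c (x - 1) + α2)
    (hc : ∀ x, 1 ≤ x → c x = α31 * a (x - 1) + α32 * b (x - 1) + α33 * c (x - 1) + α3)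
    (hrow1 : α11 + α12 + α13 = α21 + α22 + α23)
    (hrow2 : α21 + α22 + α23 = α31 + α32 + α33)
    (hcomb : ∀ x, b x = w1 * a x + w2 * c x)
    (α11' α12' α21' α22' : ℝ)
    (h11' : α11' = α11 - (w1 / w2) * α13) (h12' : α12' = α12 + (1 / w2) * α13)
    (h21' : α21' = α21 - (w1 / w2) * α23) (h22' : α22' = α22 + (1 / w2) * α23) :
    (∀ x, 1 ≤ x →
      a x = α11' * a (x - 1) + α12' * b (x - 1) + α1 ∧
      b x = α21' * a (x - 1) + α22' * b (x - 1) + α2) ∧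
    α11' + α12' = α21' + α22' :=
  decompose_to_ab_general α11 α12 α13 α21 α22 α23 α1 α2 w1 w2 hw hw2 a b c ha hb hrow1 hcomb α11'
    α12' α21' α22' h11' h12' h21' h22'
end

section
/- Let α_{ij} (1 ≤ i,j ≤ 3) and α₁, α₂, α₃, w₁, w₂ be real numbers with w₁ + w₂ = 1 and w₁ ≠ 0, and let a, b, c : ℕ → ℝ satisfy a_x = α₁₁·a_{x-1} + α₁₂·b_{x-1} + α₁₃·c_{x-1} + α₁, b_x = α₂₁·a_{x-1} + α₂₂·b_{x-1} + α₂₃·c_{x-1} + α₂, c_x = α₃₁·a_{x-1} + α₃₂·b_{x-1} + α₃₃·c_{x-1} + α₃ for all x ≥ 1. Assume α₁₁ + α₁₂ + α₁₃ = α₂₁ + α₂₂ + α₂₃ = α₃₁ + α₃₂ + α₃₃ and b_x = w₁·a_x + w₂·c_x for all x. Then, with α'₁₁ = (1/w₁)·α₂₁ + α₂₂, α'₁₂ = −(w₂/w₁)·α₂₁ + α₂₃, α'₂₁ = (1/w₁)·α₃₁ + α₃₂, α'₂₂ = −(w₂/w₁)·α₃₁ + α₃₃, one has for all x ≥ 1: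 b_x = α'₁₁·b_{x-1} + α'₁₂·c_{x-1} + α₂ and c_x = α'₂₁·b_{x-1} + α'₂₂·c_{x-1} + α₃, and moreover α'₁₁ + α'₁₂ = α'₂₁ + α'₂₂. -/
/-- Decomposition of the order-three matrix recurrence (with equal row sums and
`b = w₁·a + w₂·c`) into a pair of simultaneous recurrences in `b` and `c`;
the new row sums of coefficients are again equal. -/
theorem decompose_to_bc (α11 α12 α13 α21 α22 α23 α31 α32 α33 α1 α2 α3 w1 w2 : ℝ)
    (hw : w1 + w2 = 1) (hw1 : w1 ≠ 0) (a b c : ℕ → ℝ)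
    (ha : ∀ x, 1 ≤ x → a x = α11 * a (x - 1) + α12 * b (x - 1) + α13 * c (x - 1) + α1)
    (hb : ∀ x, 1 ≤ x → b x = α21 * a (x - 1) + α22 * b (x - 1) + α23 * c (x - 1) + α2)
    (hc : ∀ x, 1 ≤ x → c x = α31 * a (x - 1) + α32 * b (x - 1) + α33 * c (x - 1) + α3)
    (hrow1 : α11 + α12 + α13 = α21 + α22 + α23)
    (hrow2 : α21 + α22 + α23 = α31 + α32 + α33)
    (hcomb : ∀ x, b x = w1 * a x + w2 * c x)
    (α11' α12' α21' α22' : ℝ)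
    (h11' : α11' = (1 / w1) * α21 + α22) (h12' : α12' = -(w2 / w1) * α21 + α23)
    (h21' : α21' = (1 / w1) * α31 + α32) (h22' : α22' = -(w2 / w1) * α31 + α33) :
    (∀ x, 1 ≤ x →
      b x = α11' * b (x - 1) + α12' * c (x - 1) + α2 ∧
      c x = α21' * b (x - 1) + α22' * c (x - 1) + α3) ∧
    α11' + α12' = α21' + α22' := by
  have key : ∀ y, a y = (1 / w1) * b y - (w2 / w1) * c y := by
    intro y
    have h := hcomb y
    field_simp
    linarith [h]
  constructor
  · intro x hx
    constructor
    · rw [hb x hx, key (x - 1), h11', h12']; ring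
    · rw [hc x hx, key (x - 1), h21', h22']; ring
  · rw [h11', h12', h21', h22']
    field_simp
    linear_combination w1 * hrow2 - (α21 - α31) * hw
end

section
/- Let α_{ij} (1 ≤ i,j ≤ 3) and α₁, α₂, α₃, w₁, w₂ be real numbers with w₁ + w₂ = 1 and w₂ ≠ 0, and let a, b, c : ℕ → ℝ satisfy a_x = α₁₁·a_{x-1} + α₁₂·b_{x-1} + α₁₃·c_{x-1} + α₁, b_x = α₂₁·a_{x-1} + α₂₂·b_{x-1} + α₂₃·c_{x-1} + α₂, c_x = α₃₁·a_{x-1} + α₃₂·b_{x-1} + α₃₃·c_{x-1} + α₃ for all x ≥ 1. Assume α₁₁ + α₁₂ + α₁₃ = α₂₁ + α₂₂ + α₂₃ = α₃₁ + α₃₂ + α₃₃ and b_x = w₁·a_x + w₂·c_x for all x. Set C₁ = α₁₁ + α₁₂ + α₁₃, C₂ = α₁₂ + (1/w₂)·α₁₃, C₃ = α₁₁ − (w₁/w₂)·α₁₃ − α₂₁ + (w₁/w₂)·α₂₃, C₄ = α₁₂ + (1/w₂)·α₁₃ + α₂₁ − (w₁/w₂)·α₂₃, C₅ = α₂₁ −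 (w₁/w₂)·α₂₃. If C₄ ≠ 0, C₁ ≠ 1 and C₃ ≠ 1, then for all x: a_x = C₁^x·a₀ + C₂·((C₁^x − C₃^x)/C₄)·(b₀ − a₀) + α₁·(C₁^x − 1)/(C₁ − 1) + ((α₂ − α₁)·C₂/C₄)·((C₁^x − C₁)/(C₁ − 1) − (C₃^x − C₃)/(C₃ − 1)); b_x = C₁^x·b₀ + C₅·((C₁^x − C₃^x)/C₄)·(a₀ − b₀) + α₂·(C₁^x − 1)/(C₁ − 1) + ((α₁ − α₂)·C₅/C₄)·((C₁^x − C₁)/(C₁ − 1) − (C₃^x − C₃)/(C₃ − 1)); and c_x = −(w₁/w₂)·a_x + (1/w₂)·b_x. -/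
set_option maxHeartbeats 1000000 in
/-- Case 1 of the explicit solution of the order-three matrix recurrence with equal row
sums and `b = w₁·a + w₂·c`: here `C₄ ≠ 0`, `C₁ ≠ 1`, `C₃ ≠ 1`. -/
theorem three_recurrences_case1 (α11 α12 α13 α21 α22 α23 α31 α32 α33 α1 α2 α3 w1 w2 : ℝ)
    (hw : w1 + w2 = 1) (hw2 : w2 ≠ 0) (a b c : ℕ → ℝ)
    (ha : ∀ x, 1 ≤ x → a x = α11 * a (x - 1) + α12 * b (x - 1) + α13 * c (x - 1) + α1)
    (hb : ∀ x, 1 ≤ x → b x = α21 * a (x - 1) + α22 * b (x - 1) + α23 * c (x - 1) + α2)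
    (hc : ∀ x, 1 ≤ x → c x = α31 * a (x - 1) + α32 * b (x - 1) + α33 * c (x - 1) + α3)
    (hrow1 : α11 + α12 + α13 = α21 + α22 + α23)
    (hrow2 : α21 + α22 + α23 = α31 + α32 + α33)
    (hcomb : ∀ x, b x = w1 * a x + w2 * c x)
    (C1 C2 C3 C4 C5 : ℝ)
    (hC1 : C1 = α11 + α12 + α13)
    (hC2 : C2 = α12 + (1 / w2) * α13)
    (hC3 : C3 = α11 - (w1 / w2) * α13 - α21 + (w1 / w2) * α23)
    (hC4 : C4 = α12 + (1 / w2) * α13 + α21 - (w1 / w2) * α23)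
    (hC5 : C5 = α21 - (w1 / w2) * α23)
    (h1 : C4 ≠ 0) (h2 : C1 ≠ 1) (h3 : C3 ≠ 1) :
    ∀ x : ℕ,
      a x = C1 ^ x * a 0 + C2 * ((C1 ^ x - C3 ^ x) / C4) * (b 0 - a 0)
          + α1 * ((C1 ^ x - 1) / (C1 - 1))
          + ((α2 - α1) * C2 / C4)
            * ((C1 ^ x - C1) / (C1 - 1) - (C3 ^ x - C3) / (C3 - 1)) ∧
      b x = C1 ^ x * b 0 + C5 * ((C1 ^ x - C3 ^ x) / C4) * (a 0 - b 0)
          + α2 * ((C1 ^ x - 1) / (C1 - 1))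
          + ((α1 - α2) * C5 / C4)
            * ((C1 ^ x - C1) / (C1 - 1) - (C3 ^ x - C3) / (C3 - 1)) ∧
      c x = -(w1 / w2) * a x + (1 / w2) * b x := by
  have hw1 : w1 = 1 - w2 := by linarith
  subst hw1
  have h22 : α22 = α11 + α12 + α13 - α21 - α23 := by linarith
  subst h22
  have hC : ∀ x, c x = -((1 - w2) / w2) * a x + (1 / w2) * b x := by
    intro x
    rw [hcomb x]
    field_simp
    ring
  have ha' : ∀ x : ℕ, a (x + 1) = C1 * a x + C2 * (b x - a x) + α1 := by
    intro x
    have h := ha (x + 1) (by omega)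
    simp only [Nat.add_sub_cancel] at h
    rw [h, hC x, hC1, hC2]
    field_simp
    ring
  have hb' : ∀ x : ℕ, b (x + 1) = C1 * b x + C5 * (a x - b x) + α2 := by
    intro x
    have h := hb (x + 1) (by omega)
    simp only [Nat.add_sub_cancel] at h
    rw [h, hC x, hC1, hC5]
    field_simp
    ring
  have hK3 : C3 = C1 - C4 := by
    rw [hC1, hC3, hC4]; field_simp; ring
  have hK4 : C4 = C2 + C5 := by rw [hC2, hC4, hC5]; ring
  clear hC1 hC2 hC3 hC4 hC5 ha hb hc hrow1 hrow2 hcomb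
  have h2' : C1 - 1 ≠ 0 := sub_ne_zero.mpr h2
  have h3' : C3 - 1 ≠ 0 := sub_ne_zero.mpr h3
  subst hK3 hK4
  set C4 : ℝ := C2 + C5 with hC4
  set C3 : ℝ := C1 - C4 with hC3
  -- difference sequence
  have hd : ∀ x : ℕ, b x - a x = C3 ^ x * (b 0 - a 0)
      + (α2 - α1) * ((C3 ^ x - 1) / (C3 - 1)) := by
    intro x
    induction x with
    | zero => simp
    | succ n ih =>
      have e : b (n + 1) - a (n + 1) = C3 * (b n - a n) + (α2 - α1) := by
        rw [ha' n, hb' n]; ring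
      rw [e, ih]
      field_simp
      ring
  have hA : ∀ x : ℕ, a x = C1 ^ x * a 0 + C2 * ((C1 ^ x - C3 ^ x) / C4) * (b 0 - a 0)
          + α1 * ((C1 ^ x - 1) / (C1 - 1))
          + ((α2 - α1) * C2 / C4)
            * ((C1 ^ x - C1) / (C1 - 1) - (C3 ^ x - C3) / (C3 - 1)) := by
    intro x
    induction x with
    | zero =>
      field_simp
      ring
    | succ n ih =>
      rw [ha' n, hd n, ih]
      field_simp
      ring
  refine fun x => ⟨hA x, ?_, hC x⟩
  have hbx : b x = a x + (b x - a x) := by ring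
  rw [hbx, hd x, hA x]
  field_simp
  ring
end

section
/- Let α_{ij} (1 ≤ i,j ≤ 3) and α₁, α₂, α₃, w₁, w₂ be real numbers with w₁ + w₂ = 1 and w₂ ≠ 0, and let a, b, c : ℕ → ℝ satisfy a_x = α₁₁·a_{x-1} + α₁₂·b_{x-1} + α₁₃·c_{x-1} + α₁, b_x = α₂₁·a_{x-1} + α₂₂·b_{x-1} + α₂₃·c_{x-1} + α₂, c_x = α₃₁·a_{x-1} + α₃₂·b_{x-1} + α₃₃·c_{x-1} + α₃ for all x ≥ 1. Assume α₁₁ + α₁₂ + α₁₃ = α₂₁ + α₂₂ + α₂₃ = α₃₁ + α₃₂ + α₃₃ and b_x = w₁·a_x + w₂·c_x for all x. Set C₁ = α₁₁ + α₁₂ + α₁₃, C₂ = α₁₂ + (1/w₂)·α₁₃, C₄ = α₁₂ + (1/w₂)·α₁₃ + α₂₁ − (w₁/w₂)·α₂₃, C₅ = α₂₁ − (w₁/w₂)·α₂₃. If C₄ = 0 and C₁ = 1, then for all x ≥ 1: a_x = C₁^{x-1}·(C₁·a₀ + C₂·(b₀ − a₀)·x) + α₁·x + C₂·(α₂ − α₁)·x·(x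 − 1)/2; b_x = C₁^{x-1}·(C₁·b₀ + C₅·(a₀ − b₀)·x) + α₂·x + C₅·(α₁ − α₂)·x·(x − 1)/2; and c_x = −(w₁/w₂)·a_x + (1/w₂)·b_x. -/
/-!
Eliminating `c = (b - w₁ a) / w₂` turns the system into an order-two recurrence for `(a, b)`
with matrix `[[C₁ - C₂, C₂], [C₅, C₁ - C₅]]`. When `C₁ = 1` and `C₄ = C₂ + C₅ = 0` this matrix is
unipotent: the difference `b - a` is an arithmetic progression with step `α₂ - α₁`, and summing it
gives the quadratic closed forms for `a` and `b`.
-/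

section Elimination

variable {K : Type*} [Field K] {w1 w2 : K}

theorem eq_neg_div_mul_add_one_div_mul_of_eq (hw2 : w2 ≠ 0) {a b c : K}
    (h : b = w1 * a + w2 * c) : c = -(w1 / w2) * a + (1 / w2) * b := by
  field_simp
  linear_combination -h

theorem mul_add_mul_add_mul_eq_of_eq (hw2 : w2 ≠ 0) {a b c : K}
    (h : b = w1 * a + w2 * c) (p q r : K) :
    p * a + q * b + r * c = (p - w1 / w2 * r) * a + (q + 1 / w2 * r) * b := by
  rw [eq_neg_div_mul_add_one_div_mul_of_eq hw2 h]
  ring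

theorem sub_div_mul_eq_of_add_eq_one (hw : w1 + w2 = 1) (hw2 : w2 ≠ 0) (p q r : K) :
    p - w1 / w2 * r = (p + q + r) - (q + 1 / w2 * r) := by
  rw [show w1 = 1 - w2 by linear_combination hw]
  field_simp
  ring

end Elimination

section Unipotent

variable {K : Type*} [Field K] {k l β γ : K} {u v : ℕ → K}

theorem sub_eq_of_unipotent_recurrence (hkl : k + l = 0)
    (hu : ∀ n, u (n + 1) = (1 - k) * u n + k * v n + β)
    (hv : ∀ n, v (n + 1) = (1 - l) * v n + l * u n + γ) (n : ℕ) :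
    v n - u n = v 0 - u 0 + (γ - β) * n := by
  induction n with
  | zero => simp
  | succ n ih =>
    rw [hu, hv, Nat.cast_succ]
    linear_combination ih + (u n - v n) * hkl

theorem eq_of_unipotent_recurrence [CharZero K] (hkl : k + l = 0)
    (hu : ∀ n, u (n + 1) = (1 - k) * u n + k * v n + β)
    (hv : ∀ n, v (n + 1) = (1 - l) * v n + l * u n + γ) (n : ℕ) :
    u n = u 0 + k * (v 0 - u 0) * n + β * n + k * (γ - β) * ((n : K) * ((n : K) - 1) / 2) := by
  induction n with
  | zero => simp
  | succ n ih =>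
    have hdiff := sub_eq_of_unipotent_recurrence hkl hu hv n
    rw [hu, Nat.cast_succ]
    linear_combination ih + k * hdiff

end Unipotent

theorem three_recurrences_case5_general (α11 α12 α13 α21 α22 α23 α1 α2 w1 w2 : ℝ)
    (hw : w1 + w2 = 1) (hw2 : w2 ≠ 0) (a b c : ℕ → ℝ)
    (ha : ∀ x, 1 ≤ x → a x = α11 * a (x - 1) + α12 * b (x - 1) + α13 * c (x - 1) + α1)
    (hb : ∀ x, 1 ≤ x → b x = α21 * a (x - 1) + α22 * b (x - 1) + α23 * c (x - 1) + α2)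
    (hrow1 : α11 + α12 + α13 = α21 + α22 + α23)
    (hcomb : ∀ x, b x = w1 * a x + w2 * c x)
    (C1 C2 C4 C5 : ℝ)
    (hC1 : C1 = α11 + α12 + α13)
    (hC2 : C2 = α12 + (1 / w2) * α13)
    (hC4 : C4 = α12 + (1 / w2) * α13 + α21 - (w1 / w2) * α23)
    (hC5 : C5 = α21 - (w1 / w2) * α23)
    (h1 : C4 = 0) (h2 : C1 = 1) :
    ∀ x : ℕ, 1 ≤ x →
      a x = C1 ^ (x - 1) * (C1 * a 0 + C2 * (b 0 - a 0) * x)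
          + α1 * x + C2 * (α2 - α1) * ((x : ℝ) * ((x : ℝ) - 1) / 2) ∧
      b x = C1 ^ (x - 1) * (C1 * b 0 + C5 * (a 0 - b 0) * x)
          + α2 * x + C5 * (α1 - α2) * ((x : ℝ) * ((x : ℝ) - 1) / 2) ∧
      c x = -(w1 / w2) * a x + (1 / w2) * b x := by
  have hC2C5 : C2 + C5 = 0 := by rw [← h1, hC4, hC2, hC5]; ring
  have ha_succ : ∀ n, a (n + 1) = (1 - C2) * a n + C2 * b n + α1 := by
    intro n
    rw [ha (n + 1) (Nat.le_add_left 1 n), Nat.add_sub_cancel,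
      mul_add_mul_add_mul_eq_of_eq hw2 (hcomb n), sub_div_mul_eq_of_add_eq_one hw hw2 α11 α12,
      ← hC1, h2, ← hC2]
  have hb_succ : ∀ n, b (n + 1) = (1 - C5) * b n + C5 * a n + α2 := by
    intro n
    have hcoeff : α22 + 1 / w2 * α23 = 1 - C5 := by
      rw [hC5, sub_div_mul_eq_of_add_eq_one hw hw2 α21 α22 α23, ← hrow1, ← hC1, h2]
      ring
    rw [hb (n + 1) (Nat.le_add_left 1 n), Nat.add_sub_cancel,
      mul_add_mul_add_mul_eq_of_eq hw2 (hcomb n), ← hC5, hcoeff]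
    ring
  intro x _
  refine ⟨?_, ?_, eq_neg_div_mul_add_one_div_mul_of_eq hw2 (hcomb x)⟩
  · rw [eq_of_unipotent_recurrence hC2C5 ha_succ hb_succ x, h2]
    ring
  · rw [eq_of_unipotent_recurrence (by linear_combination hC2C5) hb_succ ha_succ x, h2]
    ring

/-- Case 5 of the explicit solution of the order-three matrix recurrence with equal row
sums and `b = w₁·a + w₂·c`: here `C₄ = 0` and `C₁ = 1`. -/
theorem three_recurrences_case5 (α11 α12 α13 α21 α22 α23 α31 α32 α33 α1 α2 α3 w1 w2 : ℝ)
    (hw : w1 + w2 = 1) (hw2 : w2 ≠ 0) (a b c : ℕ → ℝ)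
    (ha : ∀ x, 1 ≤ x → a x = α11 * a (x - 1) + α12 * b (x - 1) + α13 * c (x - 1) + α1)
    (hb : ∀ x, 1 ≤ x → b x = α21 * a (x - 1) + α22 * b (x - 1) + α23 * c (x - 1) + α2)
    (hc : ∀ x, 1 ≤ x → c x = α31 * a (x - 1) + α32 * b (x - 1) + α33 * c (x - 1) + α3)
    (hrow1 : α11 + α12 + α13 = α21 + α22 + α23)
    (hrow2 : α21 + α22 + α23 = α31 + α32 + α33)
    (hcomb : ∀ x, b x = w1 * a x + w2 * c x)
    (C1 C2 C4 C5 : ℝ)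
    (hC1 : C1 = α11 + α12 + α13)
    (hC2 : C2 = α12 + (1 / w2) * α13)
    (hC4 : C4 = α12 + (1 / w2) * α13 + α21 - (w1 / w2) * α23)
    (hC5 : C5 = α21 - (w1 / w2) * α23)
    (h1 : C4 = 0) (h2 : C1 = 1) :
    ∀ x : ℕ, 1 ≤ x →
      a x = C1 ^ (x - 1) * (C1 * a 0 + C2 * (b 0 - a 0) * x)
          + α1 * x + C2 * (α2 - α1) * ((x : ℝ) * ((x : ℝ) - 1) / 2) ∧
      b x = C1 ^ (x - 1) * (C1 * b 0 + C5 * (a 0 - b 0) * x)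
          + α2 * x + C5 * (α1 - α2) * ((x : ℝ) * ((x : ℝ) - 1) / 2) ∧
      c x = -(w1 / w2) * a x + (1 / w2) * b x :=
  three_recurrences_case5_general α11 α12 α13 α21 α22 α23 α1 α2 w1 w2 hw hw2 a b c ha hb hrow1 hcomb
    C1 C2 C4 C5 hC1 hC2 hC4 hC5 h1 h2
end

section
/- Let α_{ij} (1 ≤ i,j ≤ 3) and α₁, α₂, α₃, w₁, w₂ be real numbers with w₁ + w₂ = 1 and w₂ ≠ 0, and let a, b, c : ℕ → ℝ satisfy a_x = α₁₁·a_{x-1} + α₁₂·b_{x-1} + α₁₃·c_{x-1} + α₁, b_x = α₂₁·a_{x-1} + α₂₂·b_{x-1} + α₂₃·c_{x-1} + α₂, c_x = α₃₁·a_{x-1} + α₃₂·b_{x-1} + α₃₃·c_{x-1} + α₃ for all x ≥ 1. Assume only α₁₁ + α₁₂ + α₁₃ = α₃₁ + α₃₂ + α₃₃ and b_x = w₁·a_x + w₂·c_x for all x. Set α*₂₁ = w₁·α₁₁ + w₂·α₃₁, α*₂₃ = w₁·α₁₃ + w₂·α₃₃, α*₂ = w₁·α₁ + w₂·α₃, C₁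 = α₁₁ + α₁₂ + α₁₃, C₂ = α₁₂ + (1/w₂)·α₁₃, C₃ = α₁₁ − (w₁/w₂)·α₁₃ − α*₂₁ + (w₁/w₂)·α*₂₃, C₄ = α₁₂ + (1/w₂)·α₁₃ + α*₂₁ − (w₁/w₂)·α*₂₃, C₅ = α*₂₁ − (w₁/w₂)·α*₂₃. If C₄ ≠ 0, C₁ ≠ 1 and C₃ ≠ 1, then for all x: a_x = C₁^x·a₀ + C₂·((C₁^x − C₃^x)/C₄)·(b₀ − a₀) + α₁·(C₁^x − 1)/(C₁ − 1) + ((α*₂ − α₁)·C₂/C₄)·((C₁^x − C₁)/(C₁ − 1) − (C₃^x − C₃)/(C₃ − 1)); b_x = C₁^x·b₀ + C₅·((C₁^x − C₃^x)/C₄)·(a₀ − b₀) + α*₂·(C₁^x − 1)/(C₁ − 1) + ((α₁ − α*₂)·C₅/C₄)·((C₁^x − C₁)/(C₁ − 1) − (C₃^x − C₃)/(C₃ − 1)); and c_x = −(w₁/w₂)·a_x + (1/w₂)·b_x. -/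
set_option maxHeartbeats 2000000


/-- Case 1 of the generalized explicit-solution theorem: only the first and third row sums
of coefficients are assumed equal, `b = w₁·a + w₂·c`, and the starred coefficients are the
affine combinations of rows 1 and 3. -/
theorem three_recurrences_general_case1
    (α11 α12 α13 α21 α22 α23 α31 α32 α33 α1 α2 α3 w1 w2 : ℝ)
    (hw : w1 + w2 = 1) (hw2 : w2 ≠ 0) (a b c : ℕ → ℝ)
    (ha : ∀ x, 1 ≤ x → a x = α11 * a (x - 1) + α12 * b (x - 1) + α13 * c (x - 1) + α1)
    (hb : ∀ x, 1 ≤ x → b x = α21 * a (x - 1) + α22 * b (x - 1) + α23 * c (x - 1) + α2)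
    (hc : ∀ x, 1 ≤ x → c x = α31 * a (x - 1) + α32 * b (x - 1) + α33 * c (x - 1) + α3)
    (hrow : α11 + α12 + α13 = α31 + α32 + α33)
    (hcomb : ∀ x, b x = w1 * a x + w2 * c x)
    (α21s α23s α2s C1 C2 C3 C4 C5 : ℝ)
    (h21s : α21s = w1 * α11 + w2 * α31)
    (h23s : α23s = w1 * α13 + w2 * α33)
    (h2s : α2s = w1 * α1 + w2 * α3)
    (hC1 : C1 = α11 + α12 + α13)
    (hC2 : C2 = α12 + (1 / w2) * α13)
    (hC3 : C3 = α11 - (w1 / w2) * α13 - α21s + (w1 / w2) * α23s)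
    (hC4 : C4 = α12 + (1 / w2) * α13 + α21s - (w1 / w2) * α23s)
    (hC5 : C5 = α21s - (w1 / w2) * α23s)
    (h1 : C4 ≠ 0) (h2 : C1 ≠ 1) (h3 : C3 ≠ 1) :
    ∀ x : ℕ,
      a x = C1 ^ x * a 0 + C2 * ((C1 ^ x - C3 ^ x) / C4) * (b 0 - a 0)
          + α1 * ((C1 ^ x - 1) / (C1 - 1))
          + ((α2s - α1) * C2 / C4)
            * ((C1 ^ x - C1) / (C1 - 1) - (C3 ^ x - C3) / (C3 - 1)) ∧
      b x = C1 ^ x * b 0 + C5 * ((C1 ^ x - C3 ^ x) / C4) * (a 0 - b 0)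
          + α2s * ((C1 ^ x - 1) / (C1 - 1))
          + ((α1 - α2s) * C5 / C4)
            * ((C1 ^ x - C1) / (C1 - 1) - (C3 ^ x - C3) / (C3 - 1)) ∧
      c x = -(w1 / w2) * a x + (1 / w2) * b x := by
  have hw1 : w1 = 1 - w2 := by linarith
  subst hw1
  have hC1ne : C1 - 1 ≠ 0 := sub_ne_zero.mpr h2
  have hC3ne : C3 - 1 ≠ 0 := sub_ne_zero.mpr h3
  -- c in terms of a and b
  have hcomb' : ∀ x, c x = (b x - (1 - w2) * a x) / w2 := by
    intro x
    have := hcomb x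
    field_simp
    linarith
  -- key algebraic identities among constants
  have hC4' : C4 = C1 - C3 := by
    rw [hC4, hC1, hC3, h21s, h23s]
    field_simp
    ring
  have hC5' : C5 = C1 - C3 - C2 := by
    rw [hC5, hC1, hC2, hC3]
    field_simp
    ring
  have hC13 : C1 - C3 ≠ 0 := by rw [← hC4']; exact h1
  -- key recurrences
  have key1 : ∀ n : ℕ, a (n + 1) = C1 * a n + C2 * (b n - a n) + α1 := by
    intro n
    have h := ha (n + 1) (by omega)
    simp only [Nat.add_sub_cancel] at h
    rw [h, hcomb' n, hC1, hC2]
    field_simp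
    ring
  have key2 : ∀ n : ℕ, b (n + 1) = C1 * b n - C5 * (b n - a n) + α2s := by
    intro n
    have h := hcomb (n + 1)
    rw [ha (n + 1) (by omega), hc (n + 1) (by omega)] at h
    simp only [Nat.add_sub_cancel] at h
    rw [h, hcomb' n, hC1, hC5, h21s, h23s, h2s]
    field_simp
    linear_combination (-(w2 ^ 2) * b n) * hrow
  intro x
  induction x with
  | zero =>
    refine ⟨?_, ?_, ?_⟩
    · field_simp
      ring
    · field_simp
      ring
    · rw [hcomb' 0]; ring
  | succ n ih =>
    obtain ⟨ihA, ihB, -⟩ := ih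
    refine ⟨?_, ?_, ?_⟩
    · rw [key1 n, ihA, ihB, hC4', hC5']
      field_simp
      ring
    · rw [key2 n, ihA, ihB, hC4', hC5']
      field_simp
      ring
    · rw [hcomb' (n + 1)]; ring
end

section
/- Let α₁₁, α₁₂, α₂₁, α₂₂, α₁, α₂ be real numbers and let a, b : ℕ → ℝ satisfy a_x = α₁₁·a_{x-1} + α₁₂·b_{x-1} + α₁ and b_x = α₂₁·a_{x-1} + α₂₂·b_{x-1} + α₂ for all x ≥ 1, and suppose the column sums of coefficients are equal: α₁₁ + α₂₁ = α₁₂ + α₂₂. If α₁₂ ≠ −α₂₁, α₁₁ − α₁₂ ≠ 1 and α₁₁ + α₂₁ ≠ 1, then for all x: a_x = (α₁₁ − α₁₂)^x·a₀ + α₁₂·(a₀ + b₀)·((α₁₁ + α₂₁)^x − (α₁₁ − α₁₂)^x)/(α₁₂ + α₂₁) + α₁·((α₁₁ − α₁₂)^x − 1)/(α₁₁ − α₁₂ − 1) + (α₁₂·(α₁ + α₂)/(α₁₂ + α₂₁))·(((α₁₁ + α₂₁)^x − α₁₁ − α₂₁)/(α₁₁ + α₂₁ − 1) − ((α₁₁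 − α₁₂)^x − α₁₁ + α₁₂)/(α₁₁ − α₁₂ − 1)), and b_x = (α₁₁ − α₁₂)^x·b₀ + α₂₁·(a₀ + b₀)·((α₁₁ + α₂₁)^x − (α₁₁ − α₁₂)^x)/(α₁₂ + α₂₁) + α₂·((α₁₁ − α₁₂)^x − 1)/(α₁₁ − α₁₂ − 1) + (α₂₁·(α₁ + α₂)/(α₁₂ + α₂₁))·(((α₁₁ + α₂₁)^x − α₁₁ − α₂₁)/(α₁₁ + α₂₁ − 1) − ((α₁₁ − α₁₂)^x − α₁₁ + α₁₂)/(α₁₁ − α₁₂ − 1)). -/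
/-- The column-sum analogue of the explicit solution lemma: two simultaneous affine
recurrences with equal column sums `α₁₁ + α₂₁ = α₁₂ + α₂₂`, in the case
`α₁₂ ≠ -α₂₁`, `α₁₁ - α₁₂ ≠ 1`, `α₁₁ + α₂₁ ≠ 1`. -/
theorem two_affine_recurrences_column_sums (α11 α12 α21 α22 α1 α2 : ℝ) (a b : ℕ → ℝ)
    (ha : ∀ x, 1 ≤ x → a x = α11 * a (x - 1) + α12 * b (x - 1) + α1)
    (hb : ∀ x, 1 ≤ x → b x = α21 * a (x - 1) + α22 * b (x - 1) + α2)
    (hcol : α11 + α21 = α12 + α22)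
    (h1 : α12 ≠ -α21) (h2 : α11 - α12 ≠ 1) (h3 : α11 + α21 ≠ 1) :
    ∀ x : ℕ,
      a x = (α11 - α12) ^ x * a 0
          + α12 * (a 0 + b 0)
            * (((α11 + α21) ^ x - (α11 - α12) ^ x) / (α12 + α21))
          + α1 * (((α11 - α12) ^ x - 1) / (α11 - α12 - 1))
          + (α12 * (α1 + α2) / (α12 + α21))
            * (((α11 + α21) ^ x - α11 - α21) / (α11 + α21 - 1)
               - ((α11 - α12) ^ x - α11 + α12) / (α11 - α12 - 1)) ∧
      b x = (α11 - α12) ^ x * b 0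
          + α21 * (a 0 + b 0)
            * (((α11 + α21) ^ x - (α11 - α12) ^ x) / (α12 + α21))
          + α2 * (((α11 - α12) ^ x - 1) / (α11 - α12 - 1))
          + (α21 * (α1 + α2) / (α12 + α21))
            * (((α11 + α21) ^ x - α11 - α21) / (α11 + α21 - 1)
               - ((α11 - α12) ^ x - α11 + α12) / (α11 - α12 - 1)) := by
  have hd1 : α12 + α21 ≠ 0 := fun h => h1 (by linarith)
  have hd2 : α11 - α12 - 1 ≠ 0 := fun h => h2 (by linarith)
  have hd3 : α11 + α21 - 1 ≠ 0 := fun h => h3 (by linarith)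
  have h22 : α22 = α11 + α21 - α12 := by linarith
  intro x
  induction x with
  | zero =>
    constructor <;> · simp; field_simp; right; ring
  | succ n ih =>
    obtain ⟨ia, ib⟩ := ih
    have hA := ha (n + 1) (by omega)
    have hB := hb (n + 1) (by omega)
    simp only [Nat.add_sub_cancel] at hA hB
    rw [hA, hB, ia, ib, h22]
    constructor <;> · field_simp; ring
end
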